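/- For every simple connected graph G there exists a choice of canonical paths Γ such that d²b ≥ γ*|E|; if G has at least 3 vertices the inequality is strict. Consequently the Poincaré bound 1 − 2|E|/(d²γ*b) is at most the Cheeger bound 1 − |E|²/(2d⁴b²) for this Γ (strictly less for |X| ≥ 3). -/

import Mathlib

/-!
Route along a spanning tree `T`. Cutting a longest route (of length `γ*`) at its middle edge
`s(a, b)` splits `T` into the `a`-side and the `b`-side, of sizes `A + B = |X|` with both
`A, B ≳ γ*/2`; every ordered pair from the `a`-side to the `b`-side is routed through the dart
`(a, b)`, so `|X| γ* < 4AB ≤ 4b`. Together with `2|E| ≤ |X| d` this gives `γ*|E| < 2db ≤ d²b`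
as soon as `d ≥ 2`, which holds for connected graphs on at least three vertices. The rational
inequalities are the same comparison after clearing denominators.
-/

open Finset SimpleGraph

/-- The bottleneck number of a routing `Γ`. -/
def bottleneck {V : Type*} [Fintype V] [DecidableEq V] (G : SimpleGraph V)
    [DecidableRel G.Adj] (Γ : ∀ x y : V, G.Walk x y) : ℕ :=
  Finset.univ.sup fun e : G.Dart =>
    (Finset.univ.filter fun p : V × V => e ∈ (Γ p.1 p.2).darts).card

/-- The maximal path length `γ*` of a routing `Γ`. -/
def maxLen {V : Type*} [Fintype V] (G : SimpleGraph V)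
    (Γ : ∀ x y : V, G.Walk x y) : ℕ :=
  Finset.univ.sup fun p : V × V => (Γ p.1 p.2).length

namespace SimpleGraph

variable {V : Type*} {G : SimpleGraph V} {a b u v x y : V}

def edgeSide (G : SimpleGraph V) (a b : V) : Set V :=
  {x | (G.deleteEdges {s(a, b)}).Reachable x a}

lemma Walk.mem_edgeSide_of_mem_support [DecidableEq V] (p : G.Walk x a) (hp : s(a, b) ∉ p.edges)
    (hy : y ∈ p.support) : y ∈ G.edgeSide a b :=
  reachable_deleteEdges_iff_exists_walk.mpr
    ⟨p.dropUntil y hy, fun h => hp (p.edges_dropUntil_subset_edges hy h)⟩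

lemma IsBridge.notMem_edgeSide (hbr : G.IsBridge s(a, b)) (hy : y ∈ G.edgeSide b a) :
    y ∉ G.edgeSide a b := by
  intro hya
  rw [edgeSide, Set.mem_ofPred_eq, Sym2.eq_swap] at hy
  exact hbr (hya.symm.trans hy)

lemma Walk.exists_dart_of_mem_edgeSide (hbr : G.IsBridge s(a, b)) (p : G.Walk x y)
    (hx : x ∈ G.edgeSide a b) (hy : y ∉ G.edgeSide a b) :
    ∃ d ∈ p.darts, d.toProd = (a, b) := by
  obtain ⟨d, hd, hfst, hsnd⟩ := p.exists_boundary_dart _ hx hy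
  refine ⟨d, hd, ?_⟩
  have hedge : d.edge = s(a, b) := by
    by_contra hne
    exact hsnd ((deleteEdges_adj.mpr ⟨d.adj, hne⟩).reachable.symm.trans hfst)
  rcases Sym2.eq_iff.mp hedge with h | ⟨hb, -⟩
  · exact Prod.ext h.1 h.2
  · exact absurd (hb ▸ hfst) (hbr.notMem_edgeSide (Reachable.refl b))

lemma Walk.exists_eq_append_cons (p : G.Walk u v) {k : ℕ} (hk : k < p.length) :
    ∃ (a b : V) (h : G.Adj a b) (q : G.Walk u a) (r : G.Walk b v),
      p = q.append (Walk.cons h r) ∧ q.length = k := by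
  induction p generalizing k with
  | nil => simp at hk
  | cons h p ih =>
    cases k with
    | zero => exact ⟨_, _, h, Walk.nil, p, rfl, rfl⟩
    | succ k =>
      obtain ⟨a, b, h', q, r, rfl, rfl⟩ := ih (by simpa using hk)
      exact ⟨a, b, h', Walk.cons h q, r, rfl, rfl⟩

lemma Walk.IsPath.length_add_one_le_ncard [Finite V] [DecidableEq V] {p : G.Walk u v}
    (hp : p.IsPath) {s : Set V} (hs : ∀ w ∈ p.support, w ∈ s) : p.length + 1 ≤ s.ncard := by
  rw [← p.length_support, ← List.toFinset_card_of_nodup hp.support_nodup,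
    ← Set.ncard_coe_finset]
  exact Set.ncard_le_ncard fun w hw => hs w (by simpa using hw)

lemma IsBridge.length_add_one_le_ncard_edgeSide [Finite V] [DecidableEq V]
    (hbr : G.IsBridge s(a, b)) {h : G.Adj a b} {q : G.Walk u a} {r : G.Walk b v}
    (hp : (q.append (Walk.cons h r)).IsPath) :
    q.length + 1 ≤ (G.edgeSide a b).ncard ∧ r.length + 1 ≤ (G.edgeSide a b)ᶜ.ncard := by
  have htrail := hp.isTrail
  rw [Walk.isTrail_append, Walk.isTrail_cons] at htrail
  obtain ⟨-, ⟨-, hr⟩, hdisj⟩ := htrail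
  have hq : s(a, b) ∉ q.edges := fun he => hdisj he (by simp)
  have hr' : s(b, a) ∉ r.reverse.edges := by
    rwa [Walk.edges_reverse, List.mem_reverse, Sym2.eq_swap]
  refine ⟨hp.of_append_left.length_add_one_le_ncard fun w hw =>
      q.mem_edgeSide_of_mem_support hq hw,
    (Walk.cons_isPath_iff h r |>.mp hp.of_append_right).1.length_add_one_le_ncard fun w hw =>
      hbr.notMem_edgeSide (r.reverse.mem_edgeSide_of_mem_support hr' (by simpa using hw))⟩

end SimpleGraph

section Routing

variable {V : Type*} [Fintype V] {G T : SimpleGraph V}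

lemma maxLen_mapLe (hTG : T ≤ G) (P : ∀ x y : V, T.Walk x y) :
    maxLen G (fun x y => (P x y).mapLe hTG) = maxLen T P := by
  simp [maxLen]

lemma length_le_maxLen (Γ : ∀ x y : V, G.Walk x y) (x y : V) : (Γ x y).length ≤ maxLen G Γ :=
  Finset.le_sup (f := fun p : V × V => (Γ p.1 p.2).length) (mem_univ (x, y))

lemma exists_length_eq_maxLen [Nonempty V] (Γ : ∀ x y : V, G.Walk x y) :
    ∃ x y, (Γ x y).length = maxLen G Γ := by
  obtain ⟨⟨x, y⟩, -, h⟩ := exists_mem_eq_sup univ univ_nonempty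
    fun p : V × V => (Γ p.1 p.2).length
  exact ⟨x, y, h.symm⟩

lemma one_le_maxLen (hV : 2 ≤ Fintype.card V) (Γ : ∀ x y : V, G.Walk x y) :
    1 ≤ maxLen G Γ := by
  obtain ⟨x, y, hxy⟩ := Fintype.exists_pair_of_one_lt_card hV
  exact (Nat.one_le_iff_ne_zero.mpr fun h => hxy (Walk.eq_of_length_eq_zero h)).trans
    (length_le_maxLen Γ x y)

lemma maxLen_lt_card [Nonempty V] {Γ : ∀ x y : V, G.Walk x y} (hΓ : ∀ x y, (Γ x y).IsPath) :
    maxLen G Γ < Fintype.card V := by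
  obtain ⟨x, y, h⟩ := exists_length_eq_maxLen Γ
  exact h ▸ (hΓ x y).length_lt

variable [DecidableEq V] [DecidableRel G.Adj]

lemma card_filter_mem_darts_le_bottleneck (Γ : ∀ x y : V, G.Walk x y) (e : G.Dart) :
    (univ.filter fun p : V × V => e ∈ (Γ p.1 p.2).darts).card ≤ bottleneck G Γ :=
  Finset.le_sup (f := fun e : G.Dart =>
    (univ.filter fun p : V × V => e ∈ (Γ p.1 p.2).darts).card) (mem_univ e)

lemma SimpleGraph.IsBridge.ncard_mul_ncard_compl_edgeSide_le_bottleneck {a b : V}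
    (hbr : G.IsBridge s(a, b)) (hab : G.Adj a b) (Γ : ∀ x y : V, G.Walk x y) :
    (G.edgeSide a b).ncard * (G.edgeSide a b)ᶜ.ncard ≤ bottleneck G Γ := by
  refine le_trans ?_ (card_filter_mem_darts_le_bottleneck Γ ⟨(a, b), hab⟩)
  rw [← Set.ncard_prod, ← Set.ncard_coe_finset]
  refine Set.ncard_le_ncard fun p hp => ?_
  obtain ⟨d, hd, hda⟩ := (Γ p.1 p.2).exists_dart_of_mem_edgeSide hbr hp.1 hp.2
  obtain rfl : d = ⟨(a, b), hab⟩ := Dart.ext _ _ hda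
  simpa using hd

lemma bottleneck_le_bottleneck_mapLe [DecidableRel T.Adj] (hTG : T ≤ G)
    (P : ∀ x y : V, T.Walk x y) :
    bottleneck T P ≤ bottleneck G fun x y => (P x y).mapLe hTG :=
  Finset.sup_le fun e _ => le_trans (card_le_card fun p hp => by
      rw [mem_filter] at hp ⊢
      exact ⟨mem_univ p, Walk.darts_map .. ▸ List.mem_map_of_mem hp.2⟩)
    (card_filter_mem_darts_le_bottleneck _ ((Hom.ofLE hTG).mapDart e))

end Routing

lemma lt_four_mul_mul_of_balanced {A B n k m : ℕ} (hA : k + 1 ≤ A) (hB : m + 1 ≤ B)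
    (hn : A + B = n) (hk : k ≤ m) (hm : m ≤ k + 1) :
    n * (k + m + 1) < 4 * (A * B) := by
  nlinarith [Nat.mul_le_mul (Nat.sub_le_sub_right hA (k + 1)) (Nat.sub_le_sub_right hB (m + 1))]


lemma SimpleGraph.IsAcyclic.card_mul_maxLen_lt_four_mul_bottleneck {V : Type*} [Fintype V]
    [DecidableEq V] {T : SimpleGraph V} [DecidableRel T.Adj] (hT : T.IsAcyclic)
    {P : ∀ x y : V, T.Walk x y} (hP : ∀ x y, (P x y).IsPath) (hV : 2 ≤ Fintype.card V) :
    Fintype.card V * maxLen T P < 4 * bottleneck T P := by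
  have : Nonempty V := Fintype.card_pos_iff.mp (by omega)
  obtain ⟨u, v, huv⟩ := exists_length_eq_maxLen P
  have hL := one_le_maxLen hV P
  -- cut the longest route at its middle edge `s(a, b)`
  obtain ⟨a, b, hab, q, r, hqr, hq⟩ :=
    (P u v).exists_eq_append_cons (k := (maxLen T P - 1) / 2) (by omega)
  have hlen : q.length + r.length + 1 = maxLen T P := by
    rw [← huv, hqr, Walk.length_append, Walk.length_cons]; omega
  have hbr := isAcyclic_iff_forall_adj_isBridge.mp hT hab
  obtain ⟨hA, hB⟩ := hbr.length_add_one_le_ncard_edgeSide (hqr ▸ hP u v)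
  have hsum := Set.ncard_add_ncard_compl (T.edgeSide a b)
  rw [Nat.card_eq_fintype_card] at hsum
  calc Fintype.card V * maxLen T P
      < 4 * ((T.edgeSide a b).ncard * (T.edgeSide a b)ᶜ.ncard) := by
        rw [← hlen]; exact lt_four_mul_mul_of_balanced hA hB hsum (by omega) (by omega)
    _ ≤ 4 * bottleneck T P :=
        Nat.mul_le_mul_left 4 (hbr.ncard_mul_ncard_compl_edgeSide_le_bottleneck hab P)

lemma SimpleGraph.two_mul_card_edgeFinset_le_card_mul_maxDegree {V : Type*} [Fintype V]
    (G : SimpleGraph V) [DecidableRel G.Adj] :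
    2 * #G.edgeFinset ≤ Fintype.card V * G.maxDegree := by
  rw [← sum_degrees_eq_twice_card_edges]
  simpa using Finset.sum_le_card_nsmul univ _ _ fun v _ => G.degree_le_maxDegree v

lemma SimpleGraph.Connected.card_le_card_edgeFinset_add_one {V : Type*} [Fintype V]
    {G : SimpleGraph V} [DecidableRel G.Adj] (hG : G.Connected) :
    Fintype.card V ≤ #G.edgeFinset + 1 := by
  simpa [Nat.card_eq_fintype_card, edgeFinset_card] using hG.card_vert_le_card_edgeSet_add_one

lemma mul_le_sq_mul_of_two_mul_le {E L n d b : ℕ} (hE : 2 * E ≤ n * d) (hconn : n ≤ E + 1)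
    (hb : n * L < 4 * b) (hL : L < n) :
    L * E ≤ d ^ 2 * b ∧ (3 ≤ n → L * E < d ^ 2 * b) := by
  rcases lt_or_ge d 2 with hd | hd
  · have hn : n ≤ 2 := by interval_cases d <;> omega
    refine ⟨?_, fun _ => by omega⟩
    interval_cases n <;> interval_cases d <;> interval_cases L <;> omega
  · have hlt : L * E < d ^ 2 * b := by
      nlinarith [Nat.mul_le_mul_left L hE, Nat.mul_lt_mul_of_pos_right hb (by omega : 0 < d),
        Nat.mul_le_mul_left (2 * d * b) hd]
    exact ⟨hlt.le, fun _ => hlt⟩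

section OrderedField

variable {K : Type*} [Field K] [LinearOrder K] [IsStrictOrderedRing K]

lemma poincare_le_cheeger_iff {E L d b : K} (hE : 0 < E) (hL : 0 < L) (hd : 0 < d)
    (hb : 0 < b) :
    1 - 2 * E / (d ^ 2 * L * b) ≤ 1 - E ^ 2 / (2 * d ^ 4 * b ^ 2) ↔ L * E ≤ 4 * d ^ 2 * b := by
  rw [sub_le_sub_iff_left, div_le_div_iff₀ (by positivity) (by positivity),
    show E ^ 2 * (d ^ 2 * L * b) = E * d ^ 2 * b * (L * E) by ring,
    show 2 * E * (2 * d ^ 4 * b ^ 2) = E * d ^ 2 * b * (4 * d ^ 2 * b) by ring]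
  exact mul_le_mul_iff_right₀ (by positivity)

lemma poincare_lt_cheeger_iff {E L d b : K} (hE : 0 < E) (hL : 0 < L) (hd : 0 < d)
    (hb : 0 < b) :
    1 - 2 * E / (d ^ 2 * L * b) < 1 - E ^ 2 / (2 * d ^ 4 * b ^ 2) ↔ L * E < 4 * d ^ 2 * b := by
  rw [sub_lt_sub_iff_left, div_lt_div_iff₀ (by positivity) (by positivity),
    show E ^ 2 * (d ^ 2 * L * b) = E * d ^ 2 * b * (L * E) by ring,
    show 2 * E * (2 * d ^ 4 * b ^ 2) = E * d ^ 2 * b * (4 * d ^ 2 * b) by ring]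
  exact mul_lt_mul_iff_right₀ (by positivity)

end OrderedField

/-- For every simple connected graph `G` there exists a choice
of canonical paths `Γ` such that `d²b ≥ γ*|E|`; if `G` has at least 3
vertices the inequality is strict.  Consequently the Poincaré bound
`1 − 2|E|/(d²γ*b)` is at most the Cheeger bound `1 − |E|²/(2d⁴b²)` for this
`Γ` (strictly less for `|X| ≥ 3`). -/
theorem stmt12 {V : Type*} [Fintype V] [DecidableEq V] (G : SimpleGraph V)
    [DecidableRel G.Adj] (hconn : G.Connected) :
    ∃ Γ : ∀ x y : V, G.Walk x y,
      (∀ x, (Γ x x).length = 0) ∧ (∀ x y, (Γ x y).IsTrail) ∧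
      G.maxDegree ^ 2 * bottleneck G Γ ≥ maxLen G Γ * G.edgeFinset.card ∧
      (3 ≤ Fintype.card V →
        G.maxDegree ^ 2 * bottleneck G Γ > maxLen G Γ * G.edgeFinset.card) ∧
      (1 - 2 * (G.edgeFinset.card : ℚ) /
          ((G.maxDegree : ℚ) ^ 2 * maxLen G Γ * bottleneck G Γ)
        ≤ 1 - (G.edgeFinset.card : ℚ) ^ 2 /
          (2 * (G.maxDegree : ℚ) ^ 4 * (bottleneck G Γ : ℚ) ^ 2)) ∧
      (3 ≤ Fintype.card V →
        1 - 2 * (G.edgeFinset.card : ℚ) /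
            ((G.maxDegree : ℚ) ^ 2 * maxLen G Γ * bottleneck G Γ)
          < 1 - (G.edgeFinset.card : ℚ) ^ 2 /
            (2 * (G.maxDegree : ℚ) ^ 4 * (bottleneck G Γ : ℚ) ^ 2)) := by
  classical
  obtain ⟨T, hTG, hT⟩ := hconn.exists_isTree_le
  choose P hP using hT.connected.exists_isPath
  set Γ : ∀ x y : V, G.Walk x y := fun x y => (P x y).mapLe hTG
  have hΓ : ∀ x y, (Γ x y).IsPath := fun x y => (hP x y).mapLe hTG
  refine ⟨Γ, fun x => Walk.length_eq_zero_iff.mpr (Walk.isPath_iff_nil.mp (hΓ x x)),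
    fun x y => (hΓ x y).isTrail, ?_⟩
  rcases lt_or_ge (Fintype.card V) 2 with hV | hV
  · have hE : #G.edgeFinset = 0 := Nat.eq_zero_of_le_zero
      (G.card_edgeFinset_le_card_choose_two.trans (Nat.choose_eq_zero_of_lt hV).le)
    simp only [hE]
    exact ⟨by simp, by omega, by simp, by omega⟩
  have := hconn.nonempty
  have hdeg := G.two_mul_card_edgeFinset_le_card_mul_maxDegree
  have hconnE := hconn.card_le_card_edgeFinset_add_one
  have hcut : Fintype.card V * maxLen G Γ < 4 * bottleneck G Γ := by
    rw [maxLen_mapLe]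
    exact (hT.isAcyclic.card_mul_maxLen_lt_four_mul_bottleneck hP hV).trans_le
      (Nat.mul_le_mul_left 4 (bottleneck_le_bottleneck_mapLe hTG P))
  obtain ⟨hle, hlt⟩ := mul_le_sq_mul_of_two_mul_le hdeg hconnE hcut (maxLen_lt_card hΓ)
  have hE : 0 < (#G.edgeFinset : ℚ) := by norm_cast; omega
  have hL : 0 < (maxLen G Γ : ℚ) := by norm_cast; exact one_le_maxLen hV Γ
  have hd : 0 < (G.maxDegree : ℚ) := by norm_cast; nlinarith
  have hb : 0 < (bottleneck G Γ : ℚ) := by norm_cast; omega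
  refine ⟨hle, hlt, (poincare_le_cheeger_iff hE hL hd hb).mpr ?_,
    fun h3 => (poincare_lt_cheeger_iff hE hL hd hb).mpr ?_⟩
  · exact_mod_cast hle.trans (by nlinarith)
  · exact_mod_cast (hlt h3).trans_le (by nlinarith)
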